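/- arXiv:2410.18404 — 7 statements merged into one kernel-verified Lean document; each statement's English description precedes it below -/
import Mathlib

section
/- Suppose M is c-CDP and for coordinate i the conditional distributions of the remaining coordinates satisfy TV(π_{x_{-i} | x_i ∈ S_i}, π_{x_{-i} | x_i ∈ S_i'}) ≤ q_i for all coordinate events S_i, S_i' of positive prior probability. Then (π, M) is δ-BCDP in coordinate i with δ_i = c_i + log(1 + q_i · e^{Σ_{j≠i} c_j} − q_i). -/
/-!
Let `g z` be the least value of `μ_x(R)` over the `x` with `x_{-i} = z`. Coordinatewise CDP gives
`g (x_{-i}) ≤ μ_x(R) ≤ e^{c_i} g (x_{-i})`, and changing the other coordinates one at a time gives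
`g z ≤ e^C g z'` with `C = ∑_{j ≠ i} c_j`. So `P(R | x_i ∈ S)` is at most `e^{c_i}` times the mean of
`g` under the conditional law of `x_{-i}` given `x_i ∈ S`, while `P(R | x_i ∈ S')` is at least its
mean under the law given `x_i ∈ S'`. Two laws at total variation distance `q` move the mean of a
function with values in `[m, e^C m]` by at most `q (e^C - 1) m`, hence by a factor at most
`1 + q (e^C - 1)`.
-/

open Finset Real

section CoordinatewiseRatio

variable {ι : Type*} [DecidableEq ι] {X : ι → Type*} {f : (∀ j, X j) → ℝ} {c : ι → ℝ}

theorem le_exp_sum_mul_of_eq_of_notMem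
    (hf : ∀ i x x', (∀ j, j ≠ i → x j = x' j) → f x ≤ exp (c i) * f x')
    (T : Finset ι) {x x' : ∀ j, X j} (h : ∀ j, j ∉ T → x j = x' j) :
    f x ≤ exp (∑ j ∈ T, c j) * f x' := by
  induction T using Finset.induction_on generalizing x with
  | empty => simp [funext fun j => h j (notMem_empty j)]
  | @insert a T ha ih =>
    calc f x ≤ exp (c a) * f (Function.update x a (x' a)) :=
          hf a x _ fun j hj => (Function.update_of_ne hj _ _).symm
      _ ≤ exp (c a) * (exp (∑ j ∈ T, c j) * f x') := by
          refine mul_le_mul_of_nonneg_left (ih fun j hj => ?_) (exp_nonneg _)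
          by_cases hja : j = a
          · subst hja; simp
          · rw [Function.update_of_ne hja]
            exact h j (by simp [hja, hj])
      _ = exp (∑ j ∈ insert a T, c j) * f x' := by rw [sum_insert ha, exp_add, mul_assoc]

variable (i : ι) [Fintype (X i)] [Nonempty (X i)]

noncomputable def coordMin (f : (∀ j, X j) → ℝ) (z : ∀ j : {j // j ≠ i}, X j) : ℝ :=
  univ.inf' univ_nonempty fun t => f ((Equiv.piSplitAt i X).symm (t, z))

theorem coordMin_le (x : ∀ j, X j) : coordMin i f (Equiv.piSplitAt i X x).2 ≤ f x := by
  calc coordMin i f (Equiv.piSplitAt i X x).2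
      ≤ f ((Equiv.piSplitAt i X).symm (x i, (Equiv.piSplitAt i X x).2)) := inf'_le _ (mem_univ _)
    _ = f x := congrArg f ((Equiv.piSplitAt i X).symm_apply_apply x)

theorem le_exp_mul_coordMin (hf : ∀ x x', (∀ j, j ≠ i → x j = x' j) → f x ≤ exp (c i) * f x')
    (x : ∀ j, X j) : f x ≤ exp (c i) * coordMin i f (Equiv.piSplitAt i X x).2 := by
  obtain ⟨t, -, ht⟩ := exists_mem_eq_inf' univ_nonempty
    fun t => f ((Equiv.piSplitAt i X).symm (t, (Equiv.piSplitAt i X x).2))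
  rw [coordMin, ht]
  refine hf _ _ fun j hj => ?_
  simp [Equiv.piSplitAt_symm_apply, hj]

theorem coordMin_le_exp_mul_coordMin [Fintype ι]
    (hf : ∀ i x x', (∀ j, j ≠ i → x j = x' j) → f x ≤ exp (c i) * f x')
    (z z' : ∀ j : {j // j ≠ i}, X j) :
    coordMin i f z ≤ exp (∑ j ∈ univ.erase i, c j) * coordMin i f z' := by
  obtain ⟨t, -, ht⟩ := exists_mem_eq_inf' univ_nonempty
    fun t => f ((Equiv.piSplitAt i X).symm (t, z'))
  unfold coordMin
  rw [ht]
  refine (inf'_le _ (mem_univ t)).trans (le_exp_sum_mul_of_eq_of_notMem hf _ fun j hj => ?_)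
  obtain rfl : j = i := by simpa using hj
  simp [Equiv.piSplitAt_symm_apply]

end CoordinatewiseRatio

section TotalVariation

variable {Z : Type*} [Fintype Z] {g ν ν' : Z → ℝ} {q : ℝ}

theorem sum_mul_sub_sum_mul_le_of_tv_le {m G : ℝ} (hm : ∀ z, m ≤ g z) (hG : ∀ z, g z ≤ G)
    (hmG : m ≤ G) (hν : ∑ z, ν z = ∑ z, ν' z) (hTV : (1 / 2) * ∑ z, |ν z - ν' z| ≤ q) :
    ∑ z, g z * ν z - ∑ z, g z * ν' z ≤ q * (G - m) := by
  -- centring `g` at the midpoint of its range costs nothing since `ν` and `ν'` have equal mass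
  have hcentre : ∑ z, g z * ν z - ∑ z, g z * ν' z
      = ∑ z, (g z - (m + G) / 2) * (ν z - ν' z) := by
    simp only [sub_mul, mul_sub, sum_sub_distrib, ← mul_sum, hν]
    ring
  have hterm : ∀ z, (g z - (m + G) / 2) * (ν z - ν' z) ≤ (G - m) / 2 * |ν z - ν' z| := by
    intro z
    refine (le_abs_self _).trans ?_
    rw [abs_mul]
    gcongr
    rw [abs_le]
    constructor <;> linarith [hm z, hG z]
  calc ∑ z, g z * ν z - ∑ z, g z * ν' z
      ≤ ∑ z, (G - m) / 2 * |ν z - ν' z| := hcentre ▸ sum_le_sum fun z _ => hterm z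
    _ = (G - m) * ((1 / 2) * ∑ z, |ν z - ν' z|) := by rw [← mul_sum]; ring
    _ ≤ q * (G - m) := by rw [mul_comm q]; gcongr

theorem sum_mul_le_of_tv_le {K : ℝ} (hK : 1 ≤ K) (hg : ∀ z z', g z ≤ K * g z')
    (hν' : ∀ z, 0 ≤ ν' z) (hν1 : ∑ z, ν z = 1) (hν'1 : ∑ z, ν' z = 1)
    (hTV : (1 / 2) * ∑ z, |ν z - ν' z| ≤ q) :
    ∑ z, g z * ν z ≤ (1 + q * K - q) * ∑ z, g z * ν' z := by
  have : Nonempty Z := by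
    by_contra h
    simp [not_nonempty_iff.mp h] at hν1
  obtain ⟨zm, -, hzm⟩ := exists_mem_eq_inf' univ_nonempty g
  obtain ⟨zG, -, hzG⟩ := exists_mem_eq_sup' univ_nonempty g
  have hm : ∀ z, g zm ≤ g z := fun z => hzm ▸ inf'_le g (mem_univ z)
  have hG : ∀ z, g z ≤ g zG := fun z => hzG ▸ le_sup' g (mem_univ z)
  have hq : 0 ≤ q := le_trans (by positivity) hTV
  have hmean : g zm ≤ ∑ z, g z * ν' z := by
    calc g zm = ∑ z, g zm * ν' z := by rw [← mul_sum, hν'1, mul_one]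
      _ ≤ ∑ z, g z * ν' z := sum_le_sum fun z _ => mul_le_mul_of_nonneg_right (hm z) (hν' z)
  have hdiff := sum_mul_sub_sum_mul_le_of_tv_le hm hG (hG zm) (hν1.trans hν'1.symm) hTV
  have hspread : q * (g zG - g zm) ≤ q * (K - 1) * ∑ z, g z * ν' z := by
    calc q * (g zG - g zm) ≤ q * ((K - 1) * g zm) := by gcongr; linarith [hg zG zm]
      _ ≤ q * ((K - 1) * ∑ z, g z * ν' z) := by gcongr
      _ = q * (K - 1) * ∑ z, g z * ν' z := by ring
  linarith

end TotalVariation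

section ConditionalLaw

variable {ι : Type*} [Fintype ι] [DecidableEq ι] {X : ι → Type*} [∀ j, Fintype (X j)]
  [∀ j, DecidableEq (X j)] (p : (∀ j, X j) → ℝ) (i : ι) (S : Finset (X i))

def coordMass : ℝ := ∑ x ∈ univ.filter (fun x : ∀ j, X j => x i ∈ S), p x

/-- The paper's `π_{x_{-i} | x_i ∈ S}`; identically `0` when `coordMass p i S = 0`. -/
noncomputable def condLaw (z : ∀ j : {j // j ≠ i}, X j) : ℝ :=
  (∑ x ∈ univ.filter (fun x : ∀ j, X j => x i ∈ S ∧ ∀ j : {j // j ≠ i}, x j = z j), p x) /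
    coordMass p i S

theorem sum_mul_condLaw (h : (∀ j : {j // j ≠ i}, X j) → ℝ) :
    ∑ z, h z * condLaw p i S z =
      (∑ x ∈ univ.filter (fun x : ∀ j, X j => x i ∈ S), p x * h (Equiv.piSplitAt i X x).2) /
        coordMass p i S := by
  simp only [condLaw, ← mul_div_assoc, ← sum_div, mul_sum]
  rw [← sum_fiberwise _ (fun x => (Equiv.piSplitAt i X x).2)]
  congr 1
  refine sum_congr rfl fun z _ => sum_congr ?_ fun x hx => ?_
  · ext x
    simp [funext_iff]
  · rw [(mem_filter.mp hx).2, mul_comm]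

theorem sum_condLaw (hS : coordMass p i S ≠ 0) : ∑ z, condLaw p i S z = 1 := by
  rw [← div_self hS]
  simpa [coordMass] using sum_mul_condLaw p i S 1

variable {p}

theorem coordMass_nonneg (hp : ∀ x, 0 ≤ p x) : 0 ≤ coordMass p i S :=
  sum_nonneg fun x _ => hp x

theorem condLaw_nonneg (hp : ∀ x, 0 ≤ p x) (z : ∀ j : {j // j ≠ i}, X j) :
    0 ≤ condLaw p i S z :=
  div_nonneg (sum_nonneg fun x _ => hp x) (coordMass_nonneg i S hp)

variable {F : (∀ j, X j) → ℝ} {h : (∀ j : {j // j ≠ i}, X j) → ℝ}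

theorem div_coordMass_le_sum_mul_condLaw (hp : ∀ x, 0 ≤ p x)
    (hF : ∀ x, F x ≤ h (Equiv.piSplitAt i X x).2) :
    (∑ x ∈ univ.filter (fun x : ∀ j, X j => x i ∈ S), p x * F x) / coordMass p i S ≤
      ∑ z, h z * condLaw p i S z := by
  rw [sum_mul_condLaw]
  exact div_le_div_of_nonneg_right (sum_le_sum fun x _ => mul_le_mul_of_nonneg_left (hF x) (hp x))
    (coordMass_nonneg i S hp)

theorem sum_mul_condLaw_le_div_coordMass (hp : ∀ x, 0 ≤ p x)
    (hF : ∀ x, h (Equiv.piSplitAt i X x).2 ≤ F x) :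
    ∑ z, h z * condLaw p i S z ≤
      (∑ x ∈ univ.filter (fun x : ∀ j, X j => x i ∈ S), p x * F x) / coordMass p i S := by
  rw [sum_mul_condLaw]
  exact div_le_div_of_nonneg_right (sum_le_sum fun x _ => mul_le_mul_of_nonneg_left (hF x) (hp x))
    (coordMass_nonneg i S hp)

end ConditionalLaw

theorem cdp_to_bcdp_general {d : ℕ} {Xc : Fin d → Type*}
    [∀ j, Fintype (Xc j)] [∀ j, DecidableEq (Xc j)] {Y : Type*} [Fintype Y]
    (p : (∀ j, Xc j) → ℝ) (μ : (∀ j, Xc j) → Y → ℝ) (c : Fin d → ℝ)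
    (hc : ∀ j, 0 ≤ c j)
    (hp : ∀ x, 0 ≤ p x)
    (hCDP : ∀ (i : Fin d) (x x' : ∀ j, Xc j), (∀ j, j ≠ i → x j = x' j) →
      ∀ R : Finset Y, ∑ y ∈ R, μ x y ≤ Real.exp (c i) * ∑ y ∈ R, μ x' y)
    (i : Fin d) (qi : ℝ)
    (hTV : ∀ Si Si' : Finset (Xc i),
      0 < ∑ x ∈ Finset.univ.filter (fun x : ∀ j, Xc j => x i ∈ Si), p x →
      0 < ∑ x ∈ Finset.univ.filter (fun x : ∀ j, Xc j => x i ∈ Si'), p x →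
      (1 / 2) * ∑ z : (j : {j : Fin d // j ≠ i}) → Xc j,
        |(∑ x ∈ Finset.univ.filter
              (fun x : ∀ j, Xc j => x i ∈ Si ∧ ∀ j : {j : Fin d // j ≠ i}, x j = z j), p x) /
            (∑ x ∈ Finset.univ.filter (fun x : ∀ j, Xc j => x i ∈ Si), p x)
          - (∑ x ∈ Finset.univ.filter
              (fun x : ∀ j, Xc j => x i ∈ Si' ∧ ∀ j : {j : Fin d // j ≠ i}, x j = z j), p x) /
            (∑ x ∈ Finset.univ.filter (fun x : ∀ j, Xc j => x i ∈ Si'), p x)| ≤ qi) :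
    ∀ (R : Finset Y) (Si Si' : Finset (Xc i)),
      0 < ∑ x ∈ Finset.univ.filter (fun x : ∀ j, Xc j => x i ∈ Si), p x →
      0 < ∑ x ∈ Finset.univ.filter (fun x : ∀ j, Xc j => x i ∈ Si'), p x →
      (∑ x ∈ Finset.univ.filter (fun x : ∀ j, Xc j => x i ∈ Si), p x * ∑ y ∈ R, μ x y) /
          (∑ x ∈ Finset.univ.filter (fun x : ∀ j, Xc j => x i ∈ Si), p x)
        ≤ Real.exp (c i + Real.log (1 + qi * Real.exp (∑ j ∈ Finset.univ.erase i, c j) - qi)) *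
          ((∑ x ∈ Finset.univ.filter (fun x : ∀ j, Xc j => x i ∈ Si'), p x * ∑ y ∈ R, μ x y) /
            (∑ x ∈ Finset.univ.filter (fun x : ∀ j, Xc j => x i ∈ Si'), p x)) := by
  intro R Si Si' hS hS'
  let f : (∀ j, Xc j) → ℝ := fun x => ∑ y ∈ R, μ x y
  have hf : ∀ j x x', (∀ k, k ≠ j → x k = x' k) → f x ≤ exp (c j) * f x' :=
    fun j x x' h => hCDP j x x' h R
  obtain ⟨x₀, -⟩ := exists_ne_zero_of_sum_ne_zero hS.ne'
  have : Nonempty (Xc i) := ⟨x₀ i⟩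
  set K := exp (∑ j ∈ univ.erase i, c j)
  have hK : 1 ≤ K := one_le_exp (sum_nonneg fun j _ => hc j)
  have hq : 0 ≤ qi := le_trans (by positivity) (hTV Si Si hS hS)
  have hδ : 0 < 1 + qi * K - qi := by nlinarith
  rw [exp_add, exp_log hδ]
  calc (∑ x ∈ univ.filter (fun x => x i ∈ Si), p x * f x) / coordMass p i Si
      ≤ ∑ z, exp (c i) * coordMin i f z * condLaw p i Si z :=
        div_coordMass_le_sum_mul_condLaw i Si hp (le_exp_mul_coordMin i (hf i))
    _ = exp (c i) * ∑ z, coordMin i f z * condLaw p i Si z := by simp only [mul_assoc, mul_sum]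
    _ ≤ exp (c i) * ((1 + qi * K - qi) * ∑ z, coordMin i f z * condLaw p i Si' z) := by
        gcongr
        exact sum_mul_le_of_tv_le hK (coordMin_le_exp_mul_coordMin i hf) (condLaw_nonneg i Si' hp)
          (sum_condLaw p i Si hS.ne') (sum_condLaw p i Si' hS'.ne') (hTV Si Si' hS hS')
    _ ≤ exp (c i) * ((1 + qi * K - qi) *
          ((∑ x ∈ univ.filter (fun x => x i ∈ Si'), p x * f x) / coordMass p i Si')) := by
        gcongr
        exact sum_mul_condLaw_le_div_coordMass i Si' hp (coordMin_le i)
    _ = _ := by rw [coordMass]; ring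

/-- **CDP to BCDP.** Suppose the mechanism `μ` is `c`-CDP and, for coordinate `i`,
the conditional distributions of the remaining coordinates given `x_i ∈ Si` versus
`x_i ∈ Si'` are within total variation distance `qi`. Then `(p, μ)` is
`δᵢ`-BCDP in coordinate `i` with `δᵢ = cᵢ + log(1 + qᵢ e^{Σ_{j≠i} cⱼ} − qᵢ)`. -/
theorem cdp_to_bcdp {d : ℕ} {Xc : Fin d → Type*}
    [∀ j, Fintype (Xc j)] [∀ j, DecidableEq (Xc j)] {Y : Type*} [Fintype Y]
    (p : (∀ j, Xc j) → ℝ) (μ : (∀ j, Xc j) → Y → ℝ) (c : Fin d → ℝ)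
    (hc : ∀ j, 0 ≤ c j)
    (hp : ∀ x, 0 ≤ p x) (hp1 : ∑ x, p x = 1)
    (hμ : ∀ x y, 0 ≤ μ x y) (hμ1 : ∀ x, ∑ y, μ x y = 1)
    (hCDP : ∀ (i : Fin d) (x x' : ∀ j, Xc j), (∀ j, j ≠ i → x j = x' j) →
      ∀ R : Finset Y, ∑ y ∈ R, μ x y ≤ Real.exp (c i) * ∑ y ∈ R, μ x' y)
    (i : Fin d) (qi : ℝ)
    (hTV : ∀ Si Si' : Finset (Xc i),
      0 < ∑ x ∈ Finset.univ.filter (fun x : ∀ j, Xc j => x i ∈ Si), p x →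
      0 < ∑ x ∈ Finset.univ.filter (fun x : ∀ j, Xc j => x i ∈ Si'), p x →
      (1 / 2) * ∑ z : (j : {j : Fin d // j ≠ i}) → Xc j,
        |(∑ x ∈ Finset.univ.filter
              (fun x : ∀ j, Xc j => x i ∈ Si ∧ ∀ j : {j : Fin d // j ≠ i}, x j = z j), p x) /
            (∑ x ∈ Finset.univ.filter (fun x : ∀ j, Xc j => x i ∈ Si), p x)
          - (∑ x ∈ Finset.univ.filter
              (fun x : ∀ j, Xc j => x i ∈ Si' ∧ ∀ j : {j : Fin d // j ≠ i}, x j = z j), p x) /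
            (∑ x ∈ Finset.univ.filter (fun x : ∀ j, Xc j => x i ∈ Si'), p x)| ≤ qi) :
    ∀ (R : Finset Y) (Si Si' : Finset (Xc i)),
      0 < ∑ x ∈ Finset.univ.filter (fun x : ∀ j, Xc j => x i ∈ Si), p x →
      0 < ∑ x ∈ Finset.univ.filter (fun x : ∀ j, Xc j => x i ∈ Si'), p x →
      (∑ x ∈ Finset.univ.filter (fun x : ∀ j, Xc j => x i ∈ Si), p x * ∑ y ∈ R, μ x y) /
          (∑ x ∈ Finset.univ.filter (fun x : ∀ j, Xc j => x i ∈ Si), p x)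
        ≤ Real.exp (c i + Real.log (1 + qi * Real.exp (∑ j ∈ Finset.univ.erase i, c j) - qi)) *
          ((∑ x ∈ Finset.univ.filter (fun x : ∀ j, Xc j => x i ∈ Si'), p x * ∑ y ∈ R, μ x y) /
            (∑ x ∈ Finset.univ.filter (fun x : ∀ j, Xc j => x i ∈ Si'), p x)) :=
  cdp_to_bcdp_general p μ c hc hp hCDP i qi hTV
end

section
/- Let u, l : Ω → ℝ≥0 be functions on a finite set Ω with 0 < l(ω) ≤ u(ω) and u(ω) ≤ e^{c} l(ω) for all ω, and suppose max_ω l(ω) ≤ e^{K} min_ω l(ω). Then for any two probability distributions P, Q on Ω with TV(P, Q) ≤ q, we have (Σ_ω u(ω) P(ω)) / (Σ_ω l(ω) Q(ω)) ≤ e^{c} (1 + q(e^{K} − 1)). -/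
/-!
Since `P - Q` has total mass zero, `∑ l (P - Q) = ∑ (l - min l) (P - Q)`, which is at most
`(max l - min l) · TV(P, Q)` because `0 ≤ l - min l ≤ max l - min l`. The spread
`max l - min l` is at most `(e^K - 1) min l ≤ (e^K - 1) ∑ l Q`, so
`∑ l P ≤ (1 + q (e^K - 1)) ∑ l Q`, and `u ≤ e^c l` gives the bound on `∑ u P`.
-/

open Finset Real

section WeightedSums

variable {ι : Type*} {s : Finset ι}

theorem sum_posPart_eq_half_sum_abs {x : ι → ℝ} (hx : ∑ i ∈ s, x i = 0) :
    ∑ i ∈ s, (x i)⁺ = (1 / 2) * ∑ i ∈ s, |x i| := by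
  have hdiff : ∑ i ∈ s, (x i)⁺ - ∑ i ∈ s, (x i)⁻ = 0 := by
    simp only [← sum_sub_distrib, posPart_sub_negPart, hx]
  have habs : ∑ i ∈ s, |x i| = ∑ i ∈ s, (x i)⁺ + ∑ i ∈ s, (x i)⁻ := by
    simp only [← sum_add_distrib, posPart_add_negPart]
  linarith

theorem sum_mul_sub_sum_mul_le {f P Q : ι → ℝ} {a b : ℝ}
    (ha : ∀ i ∈ s, a ≤ f i) (hb : ∀ i ∈ s, f i ≤ b)
    (hPQ : ∑ i ∈ s, P i = ∑ i ∈ s, Q i) :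
    ∑ i ∈ s, f i * P i - ∑ i ∈ s, f i * Q i
      ≤ (b - a) * ((1 / 2) * ∑ i ∈ s, |P i - Q i|) := by
  have hsum : ∑ i ∈ s, (P i - Q i) = 0 := by rw [sum_sub_distrib, hPQ, sub_self]
  have hshift : ∑ i ∈ s, f i * P i - ∑ i ∈ s, f i * Q i
      = ∑ i ∈ s, (f i - a) * (P i - Q i) := by
    have hexpand : ∀ i ∈ s,
        (f i - a) * (P i - Q i) = (f i * P i - f i * Q i) - a * (P i - Q i) := fun i _ => by ring
    rw [sum_congr rfl hexpand, sum_sub_distrib, ← mul_sum, hsum, mul_zero, sub_zero,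
      sum_sub_distrib]
  rw [hshift, ← sum_posPart_eq_half_sum_abs hsum, mul_sum]
  refine sum_le_sum fun i hi => ?_
  calc (f i - a) * (P i - Q i) ≤ (f i - a) * (P i - Q i)⁺ :=
        mul_le_mul_of_nonneg_left (le_posPart _) (sub_nonneg.2 (ha i hi))
    _ ≤ (b - a) * (P i - Q i)⁺ :=
        mul_le_mul_of_nonneg_right (by linarith [hb i hi]) (posPart_nonneg _)

theorem le_sum_mul_of_forall_le {f Q : ι → ℝ} {a : ℝ} (ha : ∀ i ∈ s, a ≤ f i)
    (hQ : ∀ i ∈ s, 0 ≤ Q i) (hQ1 : ∑ i ∈ s, Q i = 1) : a ≤ ∑ i ∈ s, f i * Q i :=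
  calc a = ∑ i ∈ s, a * Q i := by rw [← mul_sum, hQ1, mul_one]
    _ ≤ ∑ i ∈ s, f i * Q i :=
      sum_le_sum fun i hi => mul_le_mul_of_nonneg_right (ha i hi) (hQ i hi)

theorem sum_mul_le_one_add_tv_mul [Fintype ι] [Nonempty ι] {l P Q : ι → ℝ} {r : ℝ}
    (hr : 1 ≤ r) (hratio : univ.sup' univ_nonempty l ≤ r * univ.inf' univ_nonempty l)
    (hQ : ∀ i, 0 ≤ Q i) (hQ1 : ∑ i, Q i = 1) (hPQ : ∑ i, P i = ∑ i, Q i) :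
    ∑ i, l i * P i ≤ (1 + (1 / 2) * (∑ i, |P i - Q i|) * (r - 1)) * ∑ i, l i * Q i := by
  set m := univ.inf' univ_nonempty l
  set M := univ.sup' univ_nonempty l
  set tv := (1 / 2) * ∑ i, |P i - Q i|
  have hm : m ≤ ∑ i, l i * Q i :=
    le_sum_mul_of_forall_le (fun i hi => inf'_le l hi) (fun i _ => hQ i) hQ1
  have hdiff : ∑ i, l i * P i - ∑ i, l i * Q i ≤ (M - m) * tv :=
    sum_mul_sub_sum_mul_le (fun i hi => inf'_le l hi) (fun i hi => le_sup' l hi) hPQ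
  have htv : 0 ≤ tv := by positivity
  have hspread : (M - m) * tv ≤ tv * (r - 1) * ∑ i, l i * Q i :=
    calc (M - m) * tv ≤ (r - 1) * m * tv := by gcongr; linarith
      _ ≤ (r - 1) * (∑ i, l i * Q i) * tv := by gcongr
      _ = tv * (r - 1) * ∑ i, l i * Q i := by ring
  linarith

end WeightedSums

theorem ratio_bound_of_tv_general {Ω : Type*} [Fintype Ω] [Nonempty Ω]
    (u l P Q : Ω → ℝ) (c K q : ℝ)
    (hK : 0 ≤ K)
    (hl : ∀ ω, 0 < l ω)
    (huc : ∀ ω, u ω ≤ Real.exp c * l ω)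
    (hmaxmin : (Finset.univ.sup' Finset.univ_nonempty l)
      ≤ Real.exp K * (Finset.univ.inf' Finset.univ_nonempty l))
    (hP : ∀ ω, 0 ≤ P ω) (hP1 : ∑ ω, P ω = 1)
    (hQ : ∀ ω, 0 ≤ Q ω) (hQ1 : ∑ ω, Q ω = 1)
    (hTV : (1 / 2) * ∑ ω, |P ω - Q ω| ≤ q) :
    (∑ ω, u ω * P ω) / (∑ ω, l ω * Q ω) ≤ Real.exp c * (1 + q * (Real.exp K - 1)) := by
  have hlQ : 0 < ∑ ω, l ω * Q ω :=
    ((lt_inf'_iff univ_nonempty).2 fun ω _ => hl ω).trans_le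
      (le_sum_mul_of_forall_le (fun ω hω => inf'_le l hω) (fun ω _ => hQ ω) hQ1)
  have hK1 : 1 ≤ Real.exp K := one_le_exp hK
  have hlP := sum_mul_le_one_add_tv_mul hK1 hmaxmin hQ hQ1 (hP1.trans hQ1.symm)
  have huP : ∑ ω, u ω * P ω ≤ Real.exp c * ∑ ω, l ω * P ω := by
    rw [mul_sum]
    exact sum_le_sum fun ω _ => by
      rw [← mul_assoc]; exact mul_le_mul_of_nonneg_right (huc ω) (hP ω)
  rw [div_le_iff₀ hlQ]
  calc ∑ ω, u ω * P ω ≤ Real.exp c * ∑ ω, l ω * P ω := huP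
    _ ≤ Real.exp c * ((1 + q * (Real.exp K - 1)) * ∑ ω, l ω * Q ω) := by
      gcongr
      exact hlP.trans (by gcongr)
    _ = Real.exp c * (1 + q * (Real.exp K - 1)) * ∑ ω, l ω * Q ω := by ring

/-- **Key technical inequality for CDP → BCDP.** Let `u, l : Ω → ℝ` on a finite
nonempty set with `0 < l ≤ u`, `u ≤ e^c · l` pointwise, and
`max l ≤ e^K · min l`. Then for any two probability mass functions `P, Q` on `Ω`
with `TV(P,Q) ≤ q`, we have `(Σ u·P) / (Σ l·Q) ≤ e^c (1 + q(e^K − 1))`. -/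
theorem ratio_bound_of_tv {Ω : Type*} [Fintype Ω] [Nonempty Ω]
    (u l P Q : Ω → ℝ) (c K q : ℝ)
    (hc : 0 ≤ c) (hK : 0 ≤ K) (hq0 : 0 ≤ q) (hq1 : q ≤ 1)
    (hl : ∀ ω, 0 < l ω) (hlu : ∀ ω, l ω ≤ u ω)
    (huc : ∀ ω, u ω ≤ Real.exp c * l ω)
    (hmaxmin : (Finset.univ.sup' Finset.univ_nonempty l)
      ≤ Real.exp K * (Finset.univ.inf' Finset.univ_nonempty l))
    (hP : ∀ ω, 0 ≤ P ω) (hP1 : ∑ ω, P ω = 1)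
    (hQ : ∀ ω, 0 ≤ Q ω) (hQ1 : ∑ ω, Q ω = 1)
    (hTV : (1 / 2) * ∑ ω, |P ω - Q ω| ≤ q) :
    (∑ ω, u ω * P ω) / (∑ ω, l ω * Q ω) ≤ Real.exp c * (1 + q * (Real.exp K - 1)) :=
  ratio_bound_of_tv_general u l P Q c K q hK hl huc hmaxmin hP hP1 hQ hQ1 hTV
end

section
/- BCDP does not compose: there is a mechanism M on {0,1}^3 (uniform prior with independent Bernoulli(1/2) coordinates) that is 0-BCDP in coordinate 1, yet the mechanism consisting of two independent copies of M is not δ-BCDP in coordinate 1 for any finite δ. Specifically, M(x) outputs (x_1 ⊕ x_2, x_3) or (x_2, x_1 ⊕ x_3) each with probability 1/2; a single copy reveals nothing about x_1, but the pair of independent copies can have an output event whose conditional probability given x_1 = 1 is positive while given x_1 = 0 it differs by an unbounded ratio. -/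
/-!
For either value of `x₁`, as `(x₂, x₃)` ranges over `{0,1}²` each branch of `M` hits every
output exactly once, so the output law given `x₁` is uniform on `{0,1}²` whatever `x₁` is.
But when `x₁ = 0` both branches output `(x₂, x₃)`, so two independent copies always agree,
whereas for `x₁ = 1` they output `(0,0)` and `(1,1)` with probability `1/8`.
-/

open Finset Real

/-- The non-composition example mechanism on `{0,1}³`: output `(x₁ ⊕ x₂, x₃)` or
`(x₂, x₁ ⊕ x₃)` each with probability `1/2`. -/
noncomputable def ncMech : Bool × Bool × Bool → Bool × Bool → ℝ := fun x y =>
  (if y = (xor x.1 x.2.1, x.2.2) then 1 / 2 else 0) +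
  (if y = (x.2.1, xor x.1 x.2.2) then 1 / 2 else 0)

/-- Two independent copies of `ncMech`. -/
noncomputable def ncMech2 : Bool × Bool × Bool → (Bool × Bool) × (Bool × Bool) → ℝ :=
  fun x y => ncMech x y.1 * ncMech x y.2

/-- The uniform prior on `{0,1}³` (i.i.d. Bernoulli(1/2) coordinates). -/
noncomputable def ncPrior : Bool × Bool × Bool → ℝ := fun _ => 1 / 8

/-- `P(K(x) ∈ R | x ∈ A)` when `x` is drawn from `prior`. -/
noncomputable def condOutputProb {X Y : Type*} (prior : X → ℝ) (K : X → Y → ℝ)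
    (A : Finset X) (R : Finset Y) : ℝ :=
  (∑ x ∈ A, prior x * ∑ y ∈ R, K x y) / ∑ x ∈ A, prior x

lemma univ_filter_fst_mem {α β : Type*} [Fintype α] [Fintype β] [DecidableEq α]
    (S : Finset α) : univ.filter (fun x : α × β => x.1 ∈ S) = S ×ˢ univ := by
  ext; simp

lemma condOutputProb_const_prod {α β Y : Type*} [Fintype β] [Nonempty β] {c : ℝ} (hc : c ≠ 0)
    (K : α × β → Y → ℝ) (q : Y → ℝ) (hK : ∀ a y, ∑ b, K (a, b) y = q y)
    {S : Finset α} (hS : S.Nonempty) (R : Finset Y) :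
    condOutputProb (fun _ => c) K (S ×ˢ univ) R = (∑ y ∈ R, q y) / Fintype.card β := by
  have hnum : ∑ x ∈ S ×ˢ univ, c * ∑ y ∈ R, K x y = c * #S * ∑ y ∈ R, q y :=
    calc ∑ x ∈ S ×ˢ univ, c * ∑ y ∈ R, K x y
        = c * ∑ _a ∈ S, ∑ y ∈ R, q y := by
          rw [← mul_sum, sum_product]
          exact congrArg _ <| sum_congr rfl fun a _ => by
            rw [sum_comm]; exact sum_congr rfl fun y _ => hK a y
      _ = c * #S * ∑ y ∈ R, q y := by rw [sum_const, nsmul_eq_mul, mul_assoc]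
  have hden : ∑ _x ∈ S ×ˢ (univ : Finset β), c = c * #S * Fintype.card β := by
    simp only [sum_const, card_product, card_univ, nsmul_eq_mul, Nat.cast_mul]
    ring
  have hS' : (#S : ℝ) ≠ 0 := by exact_mod_cast hS.card_ne_zero
  rw [condOutputProb, hnum, hden]
  field_simp

lemma sum_ncMech_fibre (a : Bool) (y : Bool × Bool) :
    ∑ bc : Bool × Bool, ncMech (a, bc) y = 1 := by
  cases a <;> rcases y with ⟨_ | _, _ | _⟩ <;> simp [ncMech, Fintype.sum_prod_type] <;> norm_num

lemma condOutputProb_ncMech {S : Finset Bool} (hS : S.Nonempty) (R : Finset (Bool × Bool)) :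
    condOutputProb ncPrior ncMech (univ.filter (fun x : Bool × Bool × Bool => x.1 ∈ S)) R
      = #R / 4 := by
  unfold ncPrior
  rw [univ_filter_fst_mem,
    condOutputProb_const_prod (by norm_num) _ (fun _ => 1) sum_ncMech_fibre hS]
  simp

lemma ncMech_false (bc y : Bool × Bool) : ncMech (false, bc) y = if y = bc then 1 else 0 := by
  simp only [ncMech, Bool.false_xor]
  split_ifs <;> norm_num

lemma ncMech2_false_of_ne (bc : Bool × Bool) {y : (Bool × Bool) × (Bool × Bool)}
    (hy : y.1 ≠ y.2) : ncMech2 (false, bc) y = 0 := by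
  rw [ncMech2, ncMech_false, ncMech_false]
  split_ifs with h₁ h₂
  · exact absurd (h₁.trans h₂.symm) hy
  all_goals simp

lemma condOutputProb_ncMech2_false :
    condOutputProb ncPrior ncMech2
      (univ.filter (fun x : Bool × Bool × Bool => x.1 ∈ ({false} : Finset Bool)))
      {((false, false), (true, true))} = 0 := by
  rw [condOutputProb, sum_eq_zero, zero_div]
  rintro ⟨a, bc⟩ ha
  obtain rfl : a = false := by simpa using ha
  simp [ncMech2_false_of_ne]

lemma condOutputProb_ncMech2_true :
    condOutputProb ncPrior ncMech2
      (univ.filter (fun x : Bool × Bool × Bool => x.1 ∈ ({true} : Finset Bool)))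
      {((false, false), (true, true))} = 1 / 8 := by
  simp only [condOutputProb, sum_filter, Fintype.sum_prod_type]
  norm_num [ncMech2, ncMech, ncPrior]

/-- **BCDP does not compose.** The mechanism `ncMech` under the uniform prior is
`0`-BCDP in coordinate 1, yet the two-copy mechanism `ncMech2` is not `δ`-BCDP in
coordinate 1 for any finite `δ`. -/
theorem bcdp_no_composition :
    (∀ (R : Finset (Bool × Bool)) (S S' : Finset Bool), S.Nonempty → S'.Nonempty →
      (∑ x ∈ Finset.univ.filter (fun x : Bool × Bool × Bool => x.1 ∈ S),
          ncPrior x * ∑ y ∈ R, ncMech x y) /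
        (∑ x ∈ Finset.univ.filter (fun x : Bool × Bool × Bool => x.1 ∈ S), ncPrior x)
      ≤ Real.exp 0 *
        ((∑ x ∈ Finset.univ.filter (fun x : Bool × Bool × Bool => x.1 ∈ S'),
            ncPrior x * ∑ y ∈ R, ncMech x y) /
          (∑ x ∈ Finset.univ.filter (fun x : Bool × Bool × Bool => x.1 ∈ S'), ncPrior x)))
    ∧
    (∀ δ : ℝ, ¬ (∀ (R : Finset ((Bool × Bool) × (Bool × Bool)))
        (S S' : Finset Bool), S.Nonempty → S'.Nonempty →
      (∑ x ∈ Finset.univ.filter (fun x : Bool × Bool × Bool => x.1 ∈ S),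
          ncPrior x * ∑ y ∈ R, ncMech2 x y) /
        (∑ x ∈ Finset.univ.filter (fun x : Bool × Bool × Bool => x.1 ∈ S), ncPrior x)
      ≤ Real.exp δ *
        ((∑ x ∈ Finset.univ.filter (fun x : Bool × Bool × Bool => x.1 ∈ S'),
            ncPrior x * ∑ y ∈ R, ncMech2 x y) /
          (∑ x ∈ Finset.univ.filter (fun x : Bool × Bool × Bool => x.1 ∈ S'), ncPrior x)))) := by
  refine ⟨fun R S S' hS hS' => ?_, fun δ h => ?_⟩
  · change condOutputProb _ _ _ _ ≤ exp 0 * condOutputProb _ _ _ _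
    rw [condOutputProb_ncMech hS, condOutputProb_ncMech hS', exp_zero, one_mul]
  · have h_leak := h {((false, false), (true, true))} {true} {false}
      (singleton_nonempty _) (singleton_nonempty _)
    change condOutputProb _ _ _ _ ≤ exp δ * condOutputProb _ _ _ _ at h_leak
    rw [condOutputProb_ncMech2_true, condOutputProb_ncMech2_false, mul_zero] at h_leak
    norm_num at h_leak
end

section
/- If the matrix condition A_δ c ≤ 1 holds, where A_δ[i,i] = 1/δ_i and A_δ[i,j] = 1/log(1 + (e^{δ_i}−1)/q_i) for j ≠ i, and c ∈ ℝ^d_{≥0}, then for every i, δ_i ≥ c_i + log(1 + q_i e^{Σ_{j≠i} c_j} − q_i). -/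
/-!
Write `s = 1 - cᵢ/δᵢ` and `A = 1 + (e^{δᵢ} - 1)/qᵢ`, so that `qᵢ A + (1 - qᵢ) = e^{δᵢ}`.
The constraint says `Σ_{j≠i} cⱼ ≤ s log A`, i.e. `e^{Σ_{j≠i} cⱼ} ≤ A^s`, and concavity of
`x ↦ x^s` at the points `A` and `1` with weights `qᵢ`, `1 - qᵢ` gives
`1 + qᵢ e^{Σ_{j≠i} cⱼ} - qᵢ ≤ qᵢ A^s + (1 - qᵢ) ≤ e^{s δᵢ} = e^{δᵢ - cᵢ}`.
-/

open Finset Real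

theorem mul_rpow_add_one_sub_le_rpow {q a t : ℝ} (ha : 0 ≤ a) (hq0 : 0 ≤ q) (hq1 : q ≤ 1)
    (ht0 : 0 ≤ t) (ht1 : t ≤ 1) : q * a ^ t + (1 - q) ≤ (q * a + (1 - q)) ^ t := by
  have h := (concaveOn_rpow ht0 ht1).2 (Set.mem_Ici.2 ha) (Set.mem_Ici.2 zero_le_one)
    hq0 (sub_nonneg.2 hq1) (add_sub_cancel q 1)
  simpa only [smul_eq_mul, one_rpow, mul_one] using h

theorem log_one_add_mul_exp_sub_le_mul {q t D S : ℝ} (hq0 : 0 < q) (hq1 : q ≤ 1)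
    (ht0 : 0 ≤ t) (ht1 : t ≤ 1) (hD : 0 ≤ D)
    (hS : S ≤ t * log (1 + (exp D - 1) / q)) :
    log (1 + q * exp S - q) ≤ t * D := by
  set A := 1 + (exp D - 1) / q
  have hA : 1 ≤ A := le_add_of_nonneg_right (div_nonneg (sub_nonneg.2 (one_le_exp hD)) hq0.le)
  have hexpS : exp S ≤ A ^ t := by
    rw [rpow_def_of_pos (by linarith), mul_comm]
    exact exp_le_exp.2 hS
  have hmix : q * A + (1 - q) = exp D := by
    simp only [A]
    field_simp
    ring
  have hpos : 0 < 1 + q * exp S - q := by nlinarith [exp_pos S]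
  calc log (1 + q * exp S - q) ≤ log (q * A ^ t + (1 - q)) :=
        log_le_log hpos (by nlinarith)
    _ ≤ log (exp D ^ t) := by
        rw [← hmix]
        exact log_le_log (by positivity)
          (mul_rpow_add_one_sub_le_rpow (by linarith) hq0.le hq1 ht0 ht1)
    _ = t * D := by rw [← exp_mul, log_exp, mul_comm]

/-- **Linear constraint implies the CDP-to-BCDP budget constraint.** If
`A_δ c ≤ 1` componentwise, where `A_δ[i,i] = 1/δᵢ` and
`A_δ[i,j] = 1/log(1 + (e^{δᵢ}−1)/qᵢ)` for `j ≠ i`, then for every `i`,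
`δᵢ ≥ cᵢ + log(1 + qᵢ e^{Σ_{j≠i} cⱼ} − qᵢ)`. -/
theorem linear_constraint_implies_bcdp_budget {d : ℕ}
    (δ q c : Fin d → ℝ)
    (hδ : ∀ i, 0 < δ i) (hq0 : ∀ i, 0 < q i) (hq1 : ∀ i, q i ≤ 1)
    (hc : ∀ i, 0 ≤ c i)
    (hA : ∀ i, c i / δ i +
      (∑ j ∈ Finset.univ.erase i, c j) / Real.log (1 + (Real.exp (δ i) - 1) / q i) ≤ 1) :
    ∀ i, c i + Real.log (1 + q i * Real.exp (∑ j ∈ Finset.univ.erase i, c j) - q i) ≤ δ i := by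
  intro i
  set S := ∑ j ∈ Finset.univ.erase i, c j
  set g := log (1 + (exp (δ i) - 1) / q i)
  have hS : 0 ≤ S := sum_nonneg fun j _ => hc j
  have hg : 0 < g :=
    log_pos (lt_add_of_pos_right 1 (div_pos (sub_pos.2 (one_lt_exp_iff.2 (hδ i))) (hq0 i)))
  have hSg : 0 ≤ S / g := div_nonneg hS hg.le
  have hcδ : 0 ≤ c i / δ i := div_nonneg (hc i) (hδ i).le
  have hSt : S ≤ (1 - c i / δ i) * g := (div_le_iff₀ hg).1 (by linarith [hA i])
  have hbound := log_one_add_mul_exp_sub_le_mul (hq0 i) (hq1 i)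
    (by linarith [hA i]) (by linarith) (hδ i).le hSt
  have hsδ : (1 - c i / δ i) * δ i = δ i - c i := by field_simp [(hδ i).ne']
  linarith
end

section
/- The function g(x) = log(1 + (e^{δ−x} − 1)/q) is concave on [0, δ] for any δ > 0 and q ∈ (0, 1], and consequently g(x) ≥ (1 − x/δ) · log(1 + (e^δ − 1)/q) for all x ∈ [0, δ]. -/
/-!
With `a = 1 - q ≥ 0`, the factorisation `eˢ - a = eˢ (1 - a e⁻ˢ)` shows that `s ↦ log (eˢ - a)` is
linear plus the logarithm of a positive concave function, hence concave; `g x` is this function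
at `s = δ - x`, shifted by `-log q`. The lower bound is the chord inequality between
`g 0` and `g δ = 0`.
-/

open Real Set

theorem ConcaveOn.log {E : Type*} [AddCommGroup E] [Module ℝ E] {s : Set E} {f : E → ℝ}
    (hf : ConcaveOn ℝ s f) (hpos : ∀ x ∈ s, 0 < f x) : ConcaveOn ℝ s (fun x => Real.log (f x)) :=
  ⟨hf.1, fun x hx y hy _ _ ha hb hab =>
    (strictConcaveOn_log_Ioi.concaveOn.2 (hpos x hx) (hpos y hy) ha hb hab).trans
      (log_le_log (convex_Ioi (0 : ℝ) (hpos x hx) (hpos y hy) ha hb hab) (hf.2 hx hy ha hb hab))⟩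

theorem ConcaveOn.comp_const_sub {s : Set ℝ} {f : ℝ → ℝ} (hf : ConcaveOn ℝ s f) (c : ℝ) :
    ConcaveOn ℝ ((c - ·) ⁻¹' s) (fun x => f (c - x)) :=
  hf.comp_affineMap (AffineMap.const ℝ ℝ c - AffineMap.id ℝ ℝ)

theorem convex_setOf_lt_exp (a : ℝ) : Convex ℝ {t | a < exp t} :=
  Set.OrdConnected.convex ⟨fun _ hx _ _ _ hz => hx.trans_le (exp_le_exp.2 hz.1)⟩

theorem concaveOn_log_exp_sub {a : ℝ} (ha : 0 ≤ a) :
    ConcaveOn ℝ {t | a < exp t} (fun t => Real.log (exp t - a)) := by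
  have hS := convex_setOf_lt_exp a
  have hexp_neg : ConvexOn ℝ {t | a < exp t} (fun t => a * exp (-t)) :=
    ((convexOn_exp.comp_linearMap (-LinearMap.id)).subset (subset_univ _) hS).smul ha
  have hpos : ∀ t ∈ {t | a < exp t}, 0 < 1 - a * exp (-t) := by
    intro t ht
    rw [exp_neg, ← div_eq_mul_inv, sub_pos, div_lt_one (exp_pos t)]
    exact ht
  refine ((concaveOn_id hS).add (((concaveOn_const 1 hS).sub hexp_neg).log hpos)).congr ?_
  intro t ht
  have hfactor : exp t - a = exp t * (1 - a * exp (-t)) := by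
    rw [mul_sub, mul_one, mul_left_comm, ← exp_add, add_neg_cancel, exp_zero, mul_one]
  simp only [Pi.add_apply, Pi.sub_apply, id, hfactor, log_mul (exp_pos t).ne' (hpos t ht).ne', log_exp]

theorem ConcaveOn.chord_le_of_mem_Icc {f : ℝ → ℝ} {a b x : ℝ} (hf : ConcaveOn ℝ (Icc a b) f)
    (hx : x ∈ Icc a b) :
    (1 - (x - a) / (b - a)) * f a + (x - a) / (b - a) * f b ≤ f x := by
  rcases (hx.1.trans hx.2).eq_or_lt with rfl | hab
  · obtain rfl : x = a := le_antisymm hx.2 hx.1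
    simp
  have hw : 0 ≤ (x - a) / (b - a) := div_nonneg (sub_nonneg.2 hx.1) (sub_pos.2 hab).le
  have hw' : 0 ≤ 1 - (x - a) / (b - a) :=
    sub_nonneg.2 ((div_le_one (sub_pos.2 hab)).2 (by linarith [hx.2]))
  have hcomb : (1 - (x - a) / (b - a)) * a + (x - a) / (b - a) * b = x := by
    field_simp [(sub_pos.2 hab).ne']
    ring
  simpa only [smul_eq_mul, hcomb] using
    hf.2 (left_mem_Icc.2 hab.le) (right_mem_Icc.2 hab.le) hw' hw (sub_add_cancel _ _)

theorem budget_function_concave_general (δ q : ℝ) (hq0 : 0 < q) (hq1 : q ≤ 1) :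
    ConcaveOn ℝ (Set.Icc 0 δ) (fun x => Real.log (1 + (Real.exp (δ - x) - 1) / q)) ∧
    ∀ x ∈ Set.Icc 0 δ,
      (1 - x / δ) * Real.log (1 + (Real.exp δ - 1) / q)
        ≤ Real.log (1 + (Real.exp (δ - x) - 1) / q) := by
  have hIcc : Icc 0 δ ⊆ (δ - ·) ⁻¹' {t | 1 - q < exp t} := fun x hx =>
    (sub_lt_self 1 hq0).trans_le (one_le_exp (sub_nonneg.2 hx.2))
  have hconc : ConcaveOn ℝ (Icc 0 δ) (fun x => Real.log (1 + (exp (δ - x) - 1) / q)) := by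
    refine ((((concaveOn_log_exp_sub (sub_nonneg.2 hq1)).comp_const_sub δ).subset hIcc
      (convex_Icc 0 δ)).add_const (-Real.log q)).congr fun x hx => ?_
    have hquot : 1 + (exp (δ - x) - 1) / q = (exp (δ - x) - (1 - q)) / q := by
      field_simp
      ring
    rw [hquot, log_div (sub_pos.2 (hIcc hx)).ne' hq0.ne']
    exact (sub_eq_add_neg _ _).symm
  refine ⟨hconc, fun x hx => ?_⟩
  simpa using hconc.chord_le_of_mem_Icc hx

/-- **Concavity of the budget-tradeoff function.** For `δ > 0` and `q ∈ (0,1]`,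
`g(x) = log(1 + (e^{δ−x} − 1)/q)` is concave on `[0, δ]`, and consequently
`g(x) ≥ (1 − x/δ) · log(1 + (e^δ − 1)/q)` for all `x ∈ [0, δ]`. -/
theorem budget_function_concave (δ q : ℝ) (hδ : 0 < δ) (hq0 : 0 < q) (hq1 : q ≤ 1) :
    ConcaveOn ℝ (Set.Icc 0 δ) (fun x => Real.log (1 + (Real.exp (δ - x) - 1) / q)) ∧
    ∀ x ∈ Set.Icc 0 δ,
      (1 - x / δ) * Real.log (1 + (Real.exp δ - 1) / q)
        ≤ Real.log (1 + (Real.exp (δ - x) - 1) / q) :=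
  budget_function_concave_general δ q hq0 hq1
end

section
/- If the pair (π, M) is ε-BDP, then for disjoint input events S, S' of positive prior probability and any output event R of positive probability, the odds ratio [P(x ∈ S | M(x) ∈ R) / P(x ∈ S' | M(x) ∈ R)] / [π(S)/π(S')] lies in the interval [e^{−ε}, e^{ε}]. -/
open Finset Real

/-!
Since the joint mass of `S × R` is `π(S)` times `P(M(x) ∈ R | x ∈ S)`, the odds ratio equals the
ratio `P(M(x) ∈ R | x ∈ S) / P(M(x) ∈ R | x ∈ S')` of conditional output probabilities, and the
BDP inequality applied to `(S, S')` and to `(S', S)` bounds it by `e^ε` from above and by `e^{-ε}`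
from below. The denominator is positive because BDP with `S = X` bounds `P(M(x) ∈ R) > 0` by a
multiple of `P(M(x) ∈ R | x ∈ S')`.
-/

theorem div_mem_Icc_exp_of_le_exp_mul {x y ε : ℝ} (hy : 0 < y)
    (hxy : x ≤ exp ε * y) (hyx : y ≤ exp ε * x) : x / y ∈ Set.Icc (exp (-ε)) (exp ε) :=
  ⟨by rwa [exp_neg, le_div_iff₀ hy, inv_mul_le_iff₀ (exp_pos ε)],
    (div_le_iff₀ hy).2 hxy⟩

namespace BDP

variable {X Y : Type*} (p : X → ℝ) (μ : X → Y → ℝ)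

/-- The joint probability `P(S × R)` of the law `P(x, y) = p x * μ x y`. -/
def joint (S : Finset X) (R : Finset Y) : ℝ := ∑ x ∈ S, p x * ∑ y ∈ R, μ x y

def IsBDP (ε : ℝ) : Prop :=
  ∀ (S S' : Finset X) (R : Finset Y), 0 < ∑ x ∈ S, p x → 0 < ∑ x ∈ S', p x →
    joint p μ S R / ∑ x ∈ S, p x ≤ exp ε * (joint p μ S' R / ∑ x ∈ S', p x)

variable {p μ}

theorem IsBDP.joint_pos [Fintype X] {ε : ℝ} (h : IsBDP p μ ε) (hp1 : ∑ x, p x = 1)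
    {S : Finset X} {R : Finset Y} (hS : 0 < ∑ x ∈ S, p x) (hR : 0 < joint p μ univ R) :
    0 < joint p μ S R := by
  have hle := h univ S R (hp1 ▸ one_pos) hS
  rw [hp1, div_one] at hle
  have hcond : 0 < joint p μ S R / ∑ x ∈ S, p x :=
    (mul_pos_iff_of_pos_left (exp_pos ε)).1 (hR.trans_le hle)
  exact (div_pos_iff_of_pos_right hS).1 hcond

end BDP

open BDP in
theorem bdp_odds_ratio_general {X Y : Type*} [Fintype X] [Fintype Y]
    (p : X → ℝ) (μ : X → Y → ℝ) (ε : ℝ)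
    (hp1 : ∑ x, p x = 1)
    (hBDP : ∀ (S S' : Finset X) (R : Finset Y),
      0 < ∑ x ∈ S, p x → 0 < ∑ x ∈ S', p x →
      (∑ x ∈ S, p x * ∑ y ∈ R, μ x y) / (∑ x ∈ S, p x)
        ≤ Real.exp ε * ((∑ x ∈ S', p x * ∑ y ∈ R, μ x y) / (∑ x ∈ S', p x)))
    (S S' : Finset X) (R : Finset Y)
    (hS : 0 < ∑ x ∈ S, p x) (hS' : 0 < ∑ x ∈ S', p x)
    (hR : 0 < ∑ x, p x * ∑ y ∈ R, μ x y) :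
    Real.exp (-ε) ≤
      (((∑ x ∈ S, p x * ∑ y ∈ R, μ x y) / (∑ x, p x * ∑ y ∈ R, μ x y)) /
        ((∑ x ∈ S', p x * ∑ y ∈ R, μ x y) / (∑ x, p x * ∑ y ∈ R, μ x y))) /
      ((∑ x ∈ S, p x) / (∑ x ∈ S', p x)) ∧
    (((∑ x ∈ S, p x * ∑ y ∈ R, μ x y) / (∑ x, p x * ∑ y ∈ R, μ x y)) /
        ((∑ x ∈ S', p x * ∑ y ∈ R, μ x y) / (∑ x, p x * ∑ y ∈ R, μ x y))) /
      ((∑ x ∈ S, p x) / (∑ x ∈ S', p x)) ≤ Real.exp ε := by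
  have hIsBDP : IsBDP p μ ε := hBDP
  have hS'R : 0 < joint p μ S' R := hIsBDP.joint_pos hp1 hS' hR
  rw [div_div_div_cancel_right₀ hR.ne', div_div_div_comm]
  exact div_mem_Icc_exp_of_le_exp_mul (div_pos hS'R hS') (hBDP S S' R hS hS')
    (hBDP S' S R hS' hS)

/-- **BDP bounds the odds ratio.** If `(p, μ)` is `ε`-BDP, then for disjoint input
events `S, S'` of positive prior probability and any output event `R` of positive
probability, the ratio of posterior odds to prior odds lies in `[e^{−ε}, e^{ε}]`. -/
theorem bdp_odds_ratio {X Y : Type*} [Fintype X] [Fintype Y]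
    (p : X → ℝ) (μ : X → Y → ℝ) (ε : ℝ)
    (hp : ∀ x, 0 ≤ p x) (hp1 : ∑ x, p x = 1)
    (hμ : ∀ x y, 0 ≤ μ x y) (hμ1 : ∀ x, ∑ y, μ x y = 1)
    (hBDP : ∀ (S S' : Finset X) (R : Finset Y),
      0 < ∑ x ∈ S, p x → 0 < ∑ x ∈ S', p x →
      (∑ x ∈ S, p x * ∑ y ∈ R, μ x y) / (∑ x ∈ S, p x)
        ≤ Real.exp ε * ((∑ x ∈ S', p x * ∑ y ∈ R, μ x y) / (∑ x ∈ S', p x)))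
    (S S' : Finset X) (R : Finset Y)
    (hdisj : Disjoint S S')
    (hS : 0 < ∑ x ∈ S, p x) (hS' : 0 < ∑ x ∈ S', p x)
    (hR : 0 < ∑ x, p x * ∑ y ∈ R, μ x y) :
    Real.exp (-ε) ≤
      (((∑ x ∈ S, p x * ∑ y ∈ R, μ x y) / (∑ x, p x * ∑ y ∈ R, μ x y)) /
        ((∑ x ∈ S', p x * ∑ y ∈ R, μ x y) / (∑ x, p x * ∑ y ∈ R, μ x y))) /
      ((∑ x ∈ S, p x) / (∑ x ∈ S', p x)) ∧
    (((∑ x ∈ S, p x * ∑ y ∈ R, μ x y) / (∑ x, p x * ∑ y ∈ R, μ x y)) /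
        ((∑ x ∈ S', p x * ∑ y ∈ R, μ x y) / (∑ x, p x * ∑ y ∈ R, μ x y))) /
      ((∑ x ∈ S, p x) / (∑ x ∈ S', p x)) ≤ Real.exp ε :=
  bdp_odds_ratio_general p μ ε hp1 hBDP S S' R hS hS' hR
end

section
/- In the mean estimation mechanism with parameters c_0 = 0, c_d = min{log((e^{ζδ̃_1} + q − 1)/q), δ̃_d}, and c_i = c_d if c_d ≤ δ̃_i, else c_i = δ̃_i − log(1 + q e^{c_d} − q) (for i < d), where δ̃_i = min{δ_i, ε}, ζ ∈ (0,1], q ∈ (0,1], and 0 < δ̃_1 ≤ … ≤ δ̃_d ≤ ε: the resulting sequence satisfies 0 ≤ c_1 ≤ c_2 ≤ … ≤ c_d, and for each i, c_i + log(1 + q e^{c_d} − q) ≤ δ̃_i whenever c_d > δ̃_i. -/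
open Real

/-!
Write `M = log (1 + q e^{c_d} - q)` for the amplification loss. Since
`a ↦ log ((e^a + q - 1) / q)` inverts `x ↦ log (1 + q e^x - q)`, the cap
`c_d ≤ log ((e^{ζ δ̃₁} + q - 1) / q)` gives `0 ≤ M ≤ ζ δ̃₁ ≤ δ̃₁ ≤ δ̃ᵢ`. Given `0 ≤ M ≤ δ̃ᵢ`, the rule
`cᵢ = if c_d ≤ δ̃ᵢ then c_d else δ̃ᵢ - M` is nonnegative and inherits the monotonicity
of `δ̃`.
-/

lemma one_le_one_add_mul_exp_sub {q x : ℝ} (hq : 0 ≤ q) (hx : 0 ≤ x) :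
    1 ≤ 1 + q * exp x - q := by
  nlinarith [one_le_exp hx]

lemma one_le_exp_add_sub_div {q a : ℝ} (hq : 0 < q) (ha : 0 ≤ a) :
    1 ≤ (exp a + q - 1) / q := by
  rw [le_div_iff₀ hq]
  linarith [one_le_exp ha]

lemma log_one_add_mul_exp_sub_le {q x a : ℝ} (hq : 0 < q) (hx : 0 ≤ x) (ha : 0 ≤ a)
    (h : x ≤ log ((exp a + q - 1) / q)) : log (1 + q * exp x - q) ≤ a := by
  have hpos : 0 < 1 + q * exp x - q := one_pos.trans_le (one_le_one_add_mul_exp_sub hq.le hx)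
  rw [log_le_iff_le_exp hpos]
  have hexp : exp x ≤ (exp a + q - 1) / q := by
    rwa [← exp_le_exp, exp_log (one_pos.trans_le (one_le_exp_add_sub_div hq ha))] at h
  rw [le_div_iff₀ hq] at hexp
  linarith

section budgetAllocation

variable {ι : Type*} (δ : ι → ℝ) (cd M : ℝ)

noncomputable def budgetAllocation : ι → ℝ := fun i => if cd ≤ δ i then cd else δ i - M

variable {δ cd M}

lemma budgetAllocation_nonneg (hcd : 0 ≤ cd) (hM : ∀ i, M ≤ δ i) (i : ι) :
    0 ≤ budgetAllocation δ cd M i := by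
  unfold budgetAllocation
  split_ifs
  · exact hcd
  · linarith [hM i]

lemma budgetAllocation_monotone [Preorder ι] (hδ : Monotone δ) (hM : 0 ≤ M) :
    Monotone (budgetAllocation δ cd M) := by
  intro i j hij
  have hδij := hδ hij
  unfold budgetAllocation
  split_ifs with hi hj hj <;> linarith

lemma budgetAllocation_add_of_lt {i : ι} (hi : δ i < cd) :
    budgetAllocation δ cd M i + M = δ i := by
  simp [budgetAllocation, not_le.mpr hi]

end budgetAllocation

theorem mean_estimation_budget_valid_general (d : ℕ) (hd : 0 < d)
    (δ : Fin d → ℝ) (ε ζ q : ℝ)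
    (hδpos : ∀ i, 0 < δ i) (hδmono : Monotone δ)
    (hε : 0 < ε) (hζ0 : 0 < ζ) (hζ1 : ζ ≤ 1) (hq0 : 0 < q)
    (δt : Fin d → ℝ) (hδt : δt = fun i => min (δ i) ε)
    (cd : ℝ)
    (hcd : cd = min (Real.log ((Real.exp (ζ * δt ⟨0, hd⟩) + q - 1) / q))
      (δt ⟨d - 1, Nat.sub_lt hd Nat.one_pos⟩))
    (c : Fin d → ℝ)
    (hc : c = fun i =>
      if cd ≤ δt i then cd else δt i - Real.log (1 + q * Real.exp cd - q)) :
    (∀ i, 0 ≤ c i) ∧ Monotone c ∧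
    (∀ i, δt i < cd → c i + Real.log (1 + q * Real.exp cd - q) ≤ δt i) := by
  set M := log (1 + q * exp cd - q)
  have hc : c = budgetAllocation δt cd M := hc
  have hδt_pos : ∀ i, 0 < δt i := fun i => hδt ▸ lt_min (hδpos i) hε
  have hδt_mono : Monotone δt := hδt ▸ hδmono.min monotone_const
  have hζδ : 0 ≤ ζ * δt ⟨0, hd⟩ := mul_nonneg hζ0.le (hδt_pos _).le
  have hcd_nonneg : 0 ≤ cd :=
    hcd ▸ le_min (log_nonneg (one_le_exp_add_sub_div hq0 hζδ)) (hδt_pos _).le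
  have hM_nonneg : 0 ≤ M := log_nonneg (one_le_one_add_mul_exp_sub hq0.le hcd_nonneg)
  have hM_le : ∀ i, M ≤ δt i := fun i =>
    calc M ≤ ζ * δt ⟨0, hd⟩ :=
          log_one_add_mul_exp_sub_le hq0 hcd_nonneg hζδ (hcd ▸ min_le_left _ _)
      _ ≤ δt ⟨0, hd⟩ := mul_le_of_le_one_left (hδt_pos _).le hζ1
      _ ≤ δt i := hδt_mono (Fin.mk_le_of_le_val (Nat.zero_le _))
  subst hc
  exact ⟨budgetAllocation_nonneg hcd_nonneg hM_le, budgetAllocation_monotone hδt_mono hM_nonneg,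
    fun i hi => (budgetAllocation_add_of_lt hi).le⟩

/-- **Validity of the privacy-budget allocation in the mean-estimation mechanism.**
With `δ̃ᵢ = min(δᵢ, ε)`, `c_d = min{log((e^{ζδ̃₁} + q − 1)/q), δ̃_d}`, and
`cᵢ = c_d` if `c_d ≤ δ̃ᵢ`, else `cᵢ = δ̃ᵢ − log(1 + q e^{c_d} − q)`, the resulting
sequence satisfies `0 ≤ c₁ ≤ … ≤ c_d`, and `cᵢ + log(1 + q e^{c_d} − q) ≤ δ̃ᵢ`
whenever `c_d > δ̃ᵢ`. -/
theorem mean_estimation_budget_valid (d : ℕ) (hd : 0 < d)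
    (δ : Fin d → ℝ) (ε ζ q : ℝ)
    (hδpos : ∀ i, 0 < δ i) (hδmono : Monotone δ)
    (hε : 0 < ε) (hζ0 : 0 < ζ) (hζ1 : ζ ≤ 1) (hq0 : 0 < q) (hq1 : q ≤ 1)
    (δt : Fin d → ℝ) (hδt : δt = fun i => min (δ i) ε)
    (cd : ℝ)
    (hcd : cd = min (Real.log ((Real.exp (ζ * δt ⟨0, hd⟩) + q - 1) / q))
      (δt ⟨d - 1, Nat.sub_lt hd Nat.one_pos⟩))
    (c : Fin d → ℝ)
    (hc : c = fun i =>
      if cd ≤ δt i then cd else δt i - Real.log (1 + q * Real.exp cd - q)) :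
    (∀ i, 0 ≤ c i) ∧ Monotone c ∧
    (∀ i, δt i < cd → c i + Real.log (1 + q * Real.exp cd - q) ≤ δt i) :=
  mean_estimation_budget_valid_general d hd δ ε ζ q hδpos hδmono hε hζ0 hζ1 hq0 δt hδt cd hcd c hc
end
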